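/- arXiv:1704.01100 — 6 statements merged into one kernel-verified Lean document; each statement's English description precedes it below -/
import Mathlib

section
/- Let G be a finite group and ρ a representation of G on a finite-dimensional complex vector space W, with character χ(g) = tr(ρ(g)). Then for h, k ∈ G one has χ(γh) = χ(γk) for every γ ∈ G if and only if ρ(h) = ρ(k). -/
/-! The `g` with `χ (x * g) = χ x` for all `x` form a subgroup `H`, and the hypothesis says
`h⁻¹ * k ∈ H`. On `H` the character is constantly `χ 1 = dim W`, so its average over `H`, which is
the dimension of the `H`-invariants of `W`, is `dim W`: `H` acts trivially. -/

open Module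

def rightPeriods {G α : Type*} [Group G] (f : G → α) : Subgroup G where
  carrier := {g | ∀ x, f (x * g) = f x}
  one_mem' x := by rw [mul_one]
  mul_mem' {a b} ha hb x := by rw [← mul_assoc, hb, ha]
  inv_mem' {a} ha x := by rw [← ha, inv_mul_cancel_right]

theorem forall_apply_mul_eq_iff_inv_mul_mem_rightPeriods {G α : Type*} [Group G] (f : G → α)
    (h k : G) : (∀ γ, f (γ * h) = f (γ * k)) ↔ h⁻¹ * k ∈ rightPeriods f := by
  refine ⟨fun H x => ?_, fun H γ => ?_⟩
  · simpa [mul_assoc] using (H (x * h⁻¹)).symm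
  · rw [← H (γ * h), mul_assoc, mul_inv_cancel_left]

theorem map_inv_mul_eq_one_iff {G M F : Type*} [Group G] [Monoid M] [FunLike F G M]
    [MonoidHomClass F G M] (f : F) (a b : G) : f (a⁻¹ * b) = 1 ↔ f a = f b := by
  refine ⟨fun hab => ?_, fun hab => ?_⟩
  · rw [← mul_inv_cancel_left a b, map_mul, hab, mul_one]
  · rw [map_mul, ← hab, ← map_mul, inv_mul_cancel, map_one]

namespace Representation

variable {k G V : Type*} [Field k] [Group G] [AddCommGroup V] [Module k V]
  [FiniteDimensional k V] (ρ : Representation k G V)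

theorem eq_one_of_character_eq_finrank [CharZero k] [Finite G]
    (hχ : ∀ g, ρ.character g = finrank k V) (g : G) : ρ g = 1 := by
  have := Fintype.ofFinite G
  have hcard : (Nat.card G : k) ≠ 0 := Nat.cast_ne_zero.mpr Nat.card_pos.ne'
  have := invertibleOfNonzero hcard
  have hfinrank : finrank k ρ.invariants = finrank k V := by
    have havg := ρ.card_inv_mul_sum_char_eq_finrank
    simp only [hχ, Finset.sum_const, Finset.card_univ, Fintype.card_eq_nat_card, nsmul_eq_mul,
      inv_mul_cancel_left₀ hcard] at havg
    exact_mod_cast havg.symm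
  ext v
  exact (Submodule.eq_top_of_finrank_eq hfinrank ▸ Submodule.mem_top : v ∈ ρ.invariants) g

theorem mem_rightPeriods_character_iff [CharZero k] [Finite G] (g : G) :
    g ∈ rightPeriods ρ.character ↔ ρ g = 1 := by
  refine ⟨fun hg => ?_, fun hg x => by simp [character, hg]⟩
  let H := rightPeriods ρ.character
  let σ : Representation k H V := ρ.comp H.subtype
  have hχ : ∀ y : H, σ.character y = finrank k V := fun y =>
    (by simpa using y.2 1 : ρ.character y = finrank k V)
  exact σ.eq_one_of_character_eq_finrank hχ ⟨g, hg⟩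

end Representation

/-- For a representation `ρ` of a finite group `G` on a finite-dimensional complex
vector space `W` with character `χ g = tr (ρ g)`, and `h, k ∈ G`:
`χ (γ h) = χ (γ k)` for all `γ ∈ G` iff `ρ h = ρ k`. -/
theorem character_translates_eq_iff
    {G : Type*} [Group G] [Fintype G]
    {W : Type*} [AddCommGroup W] [Module ℂ W] [FiniteDimensional ℂ W]
    (ρ : Representation ℂ G W) (h k : G) :
    (∀ γ : G, LinearMap.trace ℂ W (ρ (γ * h)) = LinearMap.trace ℂ W (ρ (γ * k)))
      ↔ ρ h = ρ k :=
  (forall_apply_mul_eq_iff_inv_mul_mem_rightPeriods ρ.character h k).trans <|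
    (ρ.mem_rightPeriods_character_iff _).trans (map_inv_mul_eq_one_iff ρ h k)
end

section
/- Let G be a finite group and ρ a representation of G on a nonzero finite-dimensional complex vector space W, with character χ(g) = tr(ρ(g)). If h ∈ G and λ ∈ ℂ satisfy χ(γh) = λ·χ(γ) for every γ ∈ G, then λ is a root of unity (λ^n = 1 for some n ≥ 1) and ρ(h) = λ · id_W. -/
/-!
Iterating the hypothesis gives `χ (h ^ i) = λ ^ i · dim W`; at `i = d := orderOf h` this forces
`λ ^ d = 1`. Then `B = λ⁻¹ • ρ h` satisfies `B ^ d = 1` and `tr (B ^ i) = dim W` for all `i`,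
so the average `P` of `1, B, …, B ^ (d - 1)` is an idempotent of full trace. Hence `1 - P` is an
idempotent of trace zero, i.e. `P = 1`, and `B = B P = P = 1`.
-/

open Finset

theorem apply_mul_pow_of_apply_mul {M R : Type*} [Monoid M] [Monoid R] {χ : M → R} {h : M}
    {l : R} (hχ : ∀ γ, χ (γ * h) = l * χ γ) (γ : M) (i : ℕ) :
    χ (γ * h ^ i) = l ^ i * χ γ := by
  induction i with
  | zero => simp
  | succ i ih => rw [pow_succ, ← mul_assoc, hχ, ih, pow_succ', mul_assoc]

section GeomSum

variable {A : Type*} [Ring A] {x : A} {d : ℕ}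

theorem mul_geom_sum_of_pow_eq_one (hx : x ^ d = 1) :
    x * ∑ i ∈ range d, x ^ i = ∑ i ∈ range d, x ^ i := by
  have h := mul_geom_sum x d
  rw [hx, sub_self, sub_mul, one_mul, sub_eq_zero] at h
  exact h

theorem pow_mul_geom_sum_of_pow_eq_one (hx : x ^ d = 1) (k : ℕ) :
    x ^ k * ∑ i ∈ range d, x ^ i = ∑ i ∈ range d, x ^ i := by
  induction k with
  | zero => rw [pow_zero, one_mul]
  | succ k ih => rw [pow_succ', mul_assoc, ih, mul_geom_sum_of_pow_eq_one hx]

theorem geom_sum_mul_self_of_pow_eq_one (hx : x ^ d = 1) :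
    (∑ i ∈ range d, x ^ i) * ∑ i ∈ range d, x ^ i = d • ∑ i ∈ range d, x ^ i := by
  rw [sum_mul, sum_congr rfl fun k _ => pow_mul_geom_sum_of_pow_eq_one hx k, sum_const,
    card_range]

theorem isIdempotentElem_inv_smul_geom_sum {K : Type*} [Field K] [Algebra K A]
    (hx : x ^ d = 1) (hd : (d : K) ≠ 0) :
    IsIdempotentElem ((d : K)⁻¹ • ∑ i ∈ range d, x ^ i) := by
  rw [IsIdempotentElem, smul_mul_smul_comm, geom_sum_mul_self_of_pow_eq_one hx,
    ← Nat.cast_smul_eq_nsmul K, smul_smul, mul_assoc, inv_mul_cancel₀ hd, mul_one]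

end GeomSum

theorem LinearMap.eq_one_of_pow_eq_one_of_trace_pow_eq_finrank {K V : Type*} [Field K]
    [CharZero K] [AddCommGroup V] [Module K V] [FiniteDimensional K V] {f : Module.End K V}
    {d : ℕ} (hd : 0 < d) (hf : f ^ d = 1)
    (htr : ∀ i < d, trace K V (f ^ i) = Module.finrank K V) : f = 1 := by
  set P : Module.End K V := (d : K)⁻¹ • ∑ i ∈ Finset.range d, f ^ i
  have hd' : (d : K) ≠ 0 := Nat.cast_ne_zero.mpr hd.ne'
  have hfP : f * P = P := by rw [mul_smul_comm, mul_geom_sum_of_pow_eq_one hf]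
  have htrP : trace K V P = Module.finrank K V := by
    rw [map_smul, map_sum, sum_congr rfl fun i hi => htr i (Finset.mem_range.mp hi), sum_const,
      card_range, nsmul_eq_mul, smul_eq_mul, ← mul_assoc, inv_mul_cancel₀ hd', one_mul]
  have hP : P = 1 := by
    have hP' : IsIdempotentElem (1 - P) := (isIdempotentElem_inv_smul_geom_sum hf hd').one_sub
    refine (sub_eq_zero.mp (IsIdempotentElem.eq_zero_of_trace_eq_zero hP' ?_)).symm
    rw [map_sub, trace_one, htrP, sub_self]
  rwa [hP, mul_one] at hfP

/-- For a representation `ρ` of a finite group `G` on a nonzero finite-dimensional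
complex vector space `W` with character `χ g = tr (ρ g)`: if `h ∈ G` and `λ ∈ ℂ`
satisfy `χ (γ h) = λ · χ γ` for all `γ ∈ G`, then `λ` is a root of unity and
`ρ h = λ · id`. -/
theorem scalar_of_character_proportional
    {G : Type*} [Group G] [Fintype G]
    {W : Type*} [AddCommGroup W] [Module ℂ W] [FiniteDimensional ℂ W] [Nontrivial W]
    (ρ : Representation ℂ G W) (h : G) (l : ℂ)
    (hχ : ∀ γ : G, LinearMap.trace ℂ W (ρ (γ * h)) = l * LinearMap.trace ℂ W (ρ γ)) :
    (∃ n : ℕ, 1 ≤ n ∧ l ^ n = 1) ∧ ρ h = l • (1 : W →ₗ[ℂ] W) := by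
  have hpow (i : ℕ) : LinearMap.trace ℂ W (ρ (h ^ i)) = l ^ i * Module.finrank ℂ W := by
    simpa using apply_mul_pow_of_apply_mul (χ := fun g => LinearMap.trace ℂ W (ρ g)) hχ 1 i
  have hn : (Module.finrank ℂ W : ℂ) ≠ 0 := Nat.cast_ne_zero.mpr Module.finrank_pos.ne'
  have hl : l ^ orderOf h = 1 := by
    simpa [pow_orderOf_eq_one, hn] using (hpow (orderOf h)).symm
  have hl0 : l ≠ 0 := by rintro rfl; simp [(orderOf_pos h).ne'] at hl
  have hBpow (i : ℕ) : (l⁻¹ • ρ h) ^ i = (l ^ i)⁻¹ • ρ (h ^ i) := by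
    rw [smul_pow, map_pow, inv_pow]
  have hB : l⁻¹ • ρ h = 1 := by
    refine LinearMap.eq_one_of_pow_eq_one_of_trace_pow_eq_finrank (orderOf_pos h) ?_ fun i _ => ?_
    · rw [hBpow, hl, pow_orderOf_eq_one, map_one, inv_one, one_smul]
    · rw [hBpow, map_smul, hpow, smul_eq_mul, ← mul_assoc, inv_mul_cancel₀ (pow_ne_zero i hl0),
        one_mul]
  refine ⟨⟨orderOf h, orderOf_pos h, hl⟩, ?_⟩
  rw [← hB, smul_smul, mul_inv_cancel₀ hl0, one_smul]
end

section
/- Let G be a finite group and ρ_1, …, ρ_m irreducible representations of G on nonzero finite-dimensional complex vector spaces W_1, …, W_m. For each j let U_j ⊆ W_j be a nonzero subspace which is projectively general, meaning: whenever g ∈ G and μ ∈ ℂ satisfy ρ_j(g)u = μ·u for all u ∈ U_j, then ρ_j(g) = μ·id_{W_j}. Let ψ_j : Z(G) → ℂ^× be the homomorphisms on the center Z(G) of G determined by ρ_j(z) = ψ_j(z)·id_{W_j} for z ∈ Z(G). Assume (i) for every h ≠ 1 in G there is j with ρ_j(h) ≠ id, and (ii) the characters ψ_j·ψ_1⁻¹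 (j = 1, …, m) generate the full character group Hom(Z(G), ℂ^×). Then for all h, k ∈ G and λ ∈ ℂ: if ρ_j(h)u = λ·ρ_j(k)u for every j and every u ∈ U_j, then h = k. -/
/-!
If `ρ_j(h) u = λ ρ_j(k) u` on every `U_j`, then `g = k⁻¹ h` acts on each `U_j` as the scalar `λ`,
so by projective generality `ρ_j(g) = λ • 1` for every `j`. Scalars commute with everything, so
every commutator `[x, g]` lies in the joint kernel of the `ρ_j`, which is trivial: `g` is central.
Then `ψ_j(g) = λ` for all `j`, so `g` is killed by every ratio `ψ_j ψ_1⁻¹`, hence by every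
character of `Z(G)`; since characters separate the points of a finite abelian group, `g = 1`.
-/

namespace Representation

variable {k G V : Type*} [CommSemiring k] [Group G] [AddCommMonoid V] [Module k V]

theorem apply_inv_mul_eq_smul (ρ : Representation k G V) {h g : G} {l : k} {u : V}
    (hu : ρ h u = l • ρ g u) : ρ (g⁻¹ * h) u = l • u := by
  rw [map_mul, Module.End.mul_apply, hu, map_smul, inv_self_apply]

end Representation

section JointlyFaithful

variable {ι k G : Type*} [CommSemiring k] [Group G] {V : ι → Type*}
  [∀ j, AddCommMonoid (V j)] [∀ j, Module k (V j)] {ρ : ∀ j, Representation k G (V j)}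

theorem eq_of_forall_representation_eq (hfaith : ∀ h : G, h ≠ 1 → ∃ j, ρ j h ≠ 1) {a b : G}
    (hab : ∀ j, ρ j a = ρ j b) : a = b := by
  by_contra hne
  obtain ⟨j, hj⟩ := hfaith (a * b⁻¹) (mul_inv_eq_one.not.mpr hne)
  exact hj (by rw [map_mul, hab, ← map_mul, mul_inv_cancel, map_one])

theorem mem_center_of_forall_eq_smul_one (hfaith : ∀ h : G, h ≠ 1 → ∃ j, ρ j h ≠ 1) {g : G}
    (hg : ∀ j, ∃ c : k, ρ j g = c • 1) : g ∈ Subgroup.center G := by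
  refine Subgroup.mem_center_iff.mpr fun x => eq_of_forall_representation_eq hfaith fun j => ?_
  obtain ⟨c, hc⟩ := hg j
  rw [map_mul, map_mul, hc, smul_mul_assoc, mul_smul_comm, one_mul, mul_one]

end JointlyFaithful

open scoped IsMulCommutative in
theorem MonoidHom.eq_one_of_closure_eq_top {A M : Type*} [Group A] [IsMulCommutative A]
    [Finite A] [CommMonoid M] [HasEnoughRootsOfUnity M (Monoid.exponent A)]
    {S : Set (A →* Mˣ)} (hS : Subgroup.closure S = ⊤) {a : A} (ha : ∀ χ ∈ S, χ a = 1) :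
    a = 1 := by
  let eval : (A →* Mˣ) →* Mˣ :=
    { toFun := fun χ => χ a, map_one' := rfl, map_mul' := fun _ _ => rfl }
  have hker : Subgroup.closure S ≤ eval.ker := (Subgroup.closure_le _).mpr ha
  by_contra hne
  obtain ⟨χ, hχ⟩ := CommGroup.exists_apply_ne_one_of_hasEnoughRootsOfUnity A M hne
  exact hχ (hker (hS ▸ Subgroup.mem_top χ))

theorem projectively_general_separates_general
    {G : Type*} [Group G] [Fintype G] {m : ℕ} (hm : 0 < m)
    (W : Fin m → Type*) [∀ j, AddCommGroup (W j)] [∀ j, Module ℂ (W j)]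
    [∀ j, Nontrivial (W j)]
    (ρ : ∀ j, Representation ℂ G (W j))
    (U : ∀ j, Submodule ℂ (W j))
    (hgen : ∀ j, ∀ g : G, ∀ μ : ℂ,
      (∀ u ∈ U j, ρ j g u = μ • u) → ρ j g = μ • (1 : W j →ₗ[ℂ] W j))
    (ψ : Fin m → (↥(Subgroup.center G) →* ℂˣ))
    (hψ : ∀ j, ∀ z : ↥(Subgroup.center G),
      ρ j (z : G) = ((ψ j z : ℂ) • (1 : W j →ₗ[ℂ] W j)))
    (hfaith : ∀ h : G, h ≠ 1 → ∃ j, ρ j h ≠ 1)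
    (hcenter : Subgroup.closure
      (Set.range fun j : Fin m => ψ j * (ψ ⟨0, hm⟩)⁻¹) = ⊤) :
    ∀ h k : G, ∀ l : ℂ,
      (∀ j, ∀ u ∈ U j, ρ j h u = l • ρ j k u) → h = k := by
  intro h k l hhk
  have hscalar : ∀ j, ρ j (k⁻¹ * h) = l • 1 := fun j =>
    hgen j _ l fun u hu => (ρ j).apply_inv_mul_eq_smul (hhk j u hu)
  let z : Subgroup.center G :=
    ⟨k⁻¹ * h, mem_center_of_forall_eq_smul_one hfaith fun j => ⟨l, hscalar j⟩⟩
  have hψz : ∀ j, (ψ j z : ℂ) = l := fun j =>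
    smul_left_injective ℂ one_ne_zero ((hψ j z).symm.trans (hscalar j))
  have hz : z = 1 := by
    refine MonoidHom.eq_one_of_closure_eq_top hcenter ?_
    rintro _ ⟨j, rfl⟩
    rw [MonoidHom.mul_apply, MonoidHom.inv_apply, mul_inv_eq_one, Units.ext_iff, hψz, hψz]
  exact (inv_mul_eq_one.mp (congrArg Subtype.val hz)).symm

/-- Last clause of Proposition 2.9: let `ρ_1, …, ρ_m` be irreducible representations of a
finite group `G` on nonzero finite-dimensional complex vector spaces, `U_j ⊆ W_j` nonzero
projectively general subspaces, and `ψ_j` the central characters with `ρ_j z = ψ_j z • 1`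
on the center.  If (i) `⋂ ker ρ_j = 1` and (ii) the ratios `ψ_j ψ_1⁻¹` generate the
character group of `Z(G)`, then points of `G` are projectively separated: if
`ρ_j h u = λ • ρ_j k u` for all `j` and all `u ∈ U_j`, then `h = k`. -/
theorem projectively_general_separates
    {G : Type*} [Group G] [Fintype G] {m : ℕ} (hm : 0 < m)
    (W : Fin m → Type*) [∀ j, AddCommGroup (W j)] [∀ j, Module ℂ (W j)]
    [∀ j, FiniteDimensional ℂ (W j)] [∀ j, Nontrivial (W j)]
    (ρ : ∀ j, Representation ℂ G (W j))
    (hirr : ∀ j, ∀ p : Submodule ℂ (W j),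
      (∀ g : G, ∀ x ∈ p, ρ j g x ∈ p) → p = ⊥ ∨ p = ⊤)
    (U : ∀ j, Submodule ℂ (W j)) (hU : ∀ j, U j ≠ ⊥)
    (hgen : ∀ j, ∀ g : G, ∀ μ : ℂ,
      (∀ u ∈ U j, ρ j g u = μ • u) → ρ j g = μ • (1 : W j →ₗ[ℂ] W j))
    (ψ : Fin m → (↥(Subgroup.center G) →* ℂˣ))
    (hψ : ∀ j, ∀ z : ↥(Subgroup.center G),
      ρ j (z : G) = ((ψ j z : ℂ) • (1 : W j →ₗ[ℂ] W j)))
    (hfaith : ∀ h : G, h ≠ 1 → ∃ j, ρ j h ≠ 1)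
    (hcenter : Subgroup.closure
      (Set.range fun j : Fin m => ψ j * (ψ ⟨0, hm⟩)⁻¹) = ⊤) :
    ∀ h k : G, ∀ l : ℂ,
      (∀ j, ∀ u ∈ U j, ρ j h u = l • ρ j k u) → h = k :=
  projectively_general_separates_general hm W ρ U hgen ψ hψ hfaith hcenter
end

section
/- Let G be a finite abelian group, m ≥ 1, and χ_1, …, χ_m : G → ℂ^× group homomorphisms (characters of G). Then the following are equivalent: (A) for all g, g' ∈ G, if there exists λ ∈ ℂ^× with χ_j(g) = λ·χ_j(g') for every j, then g = g'; (B) the characters χ_j·χ_1⁻¹ (j = 1, …, m) generate the character group Hom(G, ℂ^×). -/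
section aux

variable {G : Type*} [CommGroup G] [Finite G]

private lemma hero (G : Type*) [CommGroup G] [Finite G] :
    HasEnoughRootsOfUnity ℂ (Monoid.exponent G) := by
  haveI : NeZero (Monoid.exponent G) := ⟨Monoid.exponent_ne_zero_of_finite⟩
  haveI : NeZero ((Monoid.exponent G : ℂ)) := NeZero.charZero
  infer_instance

private lemma card_dual (G : Type*) [CommGroup G] [Finite G] :
    Nat.card (G →* ℂˣ) = Nat.card G := by
  haveI := hero G
  exact Nat.card_congr (CommGroup.monoidHom_mulEquiv_of_hasEnoughRootsOfUnity G ℂ).some.toEquiv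

private lemma finite_dual (G : Type*) [CommGroup G] [Finite G] :
    Finite (G →* ℂˣ) := by
  haveI := hero G
  exact Finite.of_equiv G
    (CommGroup.monoidHom_mulEquiv_of_hasEnoughRootsOfUnity G ℂ).some.toEquiv.symm

/-- A subgroup of the character group with trivial common kernel is the whole group. -/
private lemma eq_top_of_forall (H : Subgroup (G →* ℂˣ))
    (h : ∀ g : G, (∀ φ ∈ H, φ g = 1) → g = 1) : H = ⊤ := by
  haveI : Finite (G →* ℂˣ) := finite_dual G
  -- evaluation map G →* (H →* ℂˣ)
  let ev : G →* (H →* ℂˣ) :=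
    { toFun := fun g =>
        { toFun := fun φ => φ.1 g
          map_one' := rfl
          map_mul' := fun φ ψ => rfl }
      map_one' := by ext φ; simp
      map_mul' := fun g g' => by ext φ; simp }
  have hinj : Function.Injective ev := by
    rw [injective_iff_map_eq_one]
    intro g hg
    refine h g fun φ hφ => ?_
    have := congrArg (fun f : H →* ℂˣ => f ⟨φ, hφ⟩) hg
    simpa [ev] using this
  haveI : Finite (H →* ℂˣ) := finite_dual H
  have h1 : Nat.card G ≤ Nat.card (H →* ℂˣ) := Nat.card_le_card_of_injective ev hinj
  rw [card_dual (H : Subgroup (G →* ℂˣ))] at h1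
  have h2 : Nat.card H ≤ Nat.card (G →* ℂˣ) := Nat.card_le_card_of_injective _ Subtype.val_injective
  rw [card_dual G] at h2
  exact Subgroup.eq_top_of_card_eq H (by rw [card_dual G]; exact le_antisymm h2 h1)

private lemma exists_char (G : Type*) [CommGroup G] [Finite G] {g : G} (hg : g ≠ 1) :
    ∃ φ : G →* ℂˣ, φ g ≠ 1 := by
  haveI := hero G
  exact CommGroup.exists_apply_ne_one_of_hasEnoughRootsOfUnity G ℂ hg

end aux

/-- Corollary 2.11 II): for a finite abelian group `G` and characters
`χ_1, …, χ_m : G → ℂˣ` (`m ≥ 1`), the projective separation condition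
(`χ_j g = λ · χ_j g'` for all `j`, some `λ ∈ ℂˣ`, implies `g = g'`) holds iff the
ratios `χ_j · χ_1⁻¹` generate the character group `Hom(G, ℂˣ)`. -/
theorem characters_projectively_separate_iff_affinely_generate
    {G : Type*} [CommGroup G] [Fintype G] {m : ℕ} (hm : 0 < m)
    (χ : Fin m → (G →* ℂˣ)) :
    (∀ g g' : G, (∃ l : ℂˣ, ∀ j, χ j g = l * χ j g') → g = g')
      ↔ Subgroup.closure
          (Set.range fun j : Fin m => χ j * (χ ⟨0, hm⟩)⁻¹)
          = (⊤ : Subgroup (G →* ℂˣ)) := by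
  constructor
  · intro hA
    apply eq_top_of_forall
    intro g hg
    have hgen : ∀ j : Fin m, (χ j * (χ ⟨0, hm⟩)⁻¹) g = 1 := fun j =>
      hg _ (Subgroup.subset_closure ⟨j, rfl⟩)
    refine hA g 1 ⟨χ ⟨0, hm⟩ g, fun j => ?_⟩
    have := hgen j
    simp only [MonoidHom.mul_apply, MonoidHom.inv_apply] at this
    rw [map_one, mul_one]
    exact (mul_inv_eq_one.mp this)
  · intro hgen g g' ⟨l, hl⟩
    -- every generator kills g * g'⁻¹
    have hker : ∀ φ : G →* ℂˣ, φ ∈ Subgroup.closure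
        (Set.range fun j : Fin m => χ j * (χ ⟨0, hm⟩)⁻¹) → φ (g * g'⁻¹) = 1 := by
      intro φ hφ
      induction hφ using Subgroup.closure_induction with
      | mem ψ hψ =>
        obtain ⟨j, rfl⟩ := hψ
        have hval : ∀ j : Fin m, (χ j) (g * g'⁻¹) = l := by
          intro j; rw [map_mul, map_inv, hl j, mul_inv_cancel_right]
        simp [hval j, hval ⟨0, hm⟩]
      | one => simp
      | mul ψ ψ' _ _ ih ih' => simp [ih, ih']
      | inv ψ _ ih => simp [ih]
    by_contra hne
    have hne' : g * g'⁻¹ ≠ 1 := by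
      intro h; exact hne (mul_inv_eq_one.mp h)
    obtain ⟨φ, hφ⟩ := exists_char G hne'
    exact hφ (hker φ (hgen ▸ Subgroup.mem_top φ))
end

section
/- Let G be a finite simple nonabelian group and ρ a nontrivial irreducible representation of G on a finite-dimensional complex vector space W, with character χ(g) = tr(ρ(g)). Then for all h, k ∈ G and λ ∈ ℂ: if χ(γh) = λ·χ(γk) for every γ ∈ G, then h = k. In particular, the map h ↦ (χ(γh))_{γ∈G} is injective and no two of its values are proportional. -/
/-!
By Schur's lemma, averaging the rank-one map `y ↦ f y • v` over conjugation by `ρ` gives the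
scalar `|G| f(v) / dim W`; read the other way, every rank-one operator is a combination of the
`ρ γ`. Hence an operator `T` with `tr (ρ γ * T) = 0` for all `γ` vanishes, and the hypothesis
forces `ρ h = λ • ρ k`. So `ρ (h k⁻¹)` is a scalar and commutes with the image of `ρ`; since `G`
is simple and `ρ` nontrivial, `ρ` is faithful, so `h k⁻¹` is central, and the centre of a
nonabelian simple group is trivial.
-/

open LinearMap Module

theorem IsSimpleGroup.injective_of_ne_one {G M : Type*} [Group G] [IsSimpleGroup G]
    [MulOneClass M] (φ : G →* M) (hφ : φ ≠ 1) : Function.Injective φ :=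
  φ.ker_eq_bot_iff.1 <| φ.normal_ker.eq_bot_or_eq_top.resolve_right (mt φ.ker_eq_top_iff.1 hφ)

theorem IsSimpleGroup.center_eq_bot {G : Type*} [Group G] [IsSimpleGroup G]
    (h : ∃ a b : G, a * b ≠ b * a) : Subgroup.center G = ⊥ := by
  refine (Subgroup.center G).normal_of_characteristic.eq_bot_or_eq_top.resolve_right fun htop => ?_
  obtain ⟨a, b, hab⟩ := h
  exact hab (Subgroup.mem_center_iff.1 (htop ▸ Subgroup.mem_top b) a)

namespace Representation

variable {k G V : Type*} [Field k] [AddCommGroup V] [Module k V]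

theorem isIrreducible_of_forall_submodule [Monoid G] [Nontrivial V] (ρ : Representation k G V)
    (hirr : ∀ p : Submodule k V, (∀ g : G, ∀ x ∈ p, ρ g x ∈ p) → p = ⊥ ∨ p = ⊤) :
    IsIrreducible ρ where
  exists_pair_ne := ⟨⊥, ⊤, fun h => bot_ne_top (congrArg Subrepresentation.toSubmodule h)⟩
  eq_bot_or_eq_top σ := (hirr σ.toSubmodule fun g _ hx => σ.apply_mem_toSubmodule g hx).imp
    (fun h => Subrepresentation.toSubmodule_injective h)
    (fun h => Subrepresentation.toSubmodule_injective h)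

variable [IsAlgClosed k] [FiniteDimensional k V]

theorem exists_eq_smul_one_of_commute [Monoid G] (ρ : Representation k G V) [IsIrreducible ρ]
    (f : Module.End k V) (hf : ∀ g, ρ g * f = f * ρ g) : ∃ c : k, f = c • 1 := by
  obtain ⟨c, hc⟩ := IsIrreducible.algebraMap_intertwiningMap_bijective_of_isAlgClosed.2
    (⟨f, fun g => (hf g).symm⟩ : IntertwiningMap ρ ρ)
  exact ⟨c, (congrArg IntertwiningMap.toLinearMap hc).symm⟩

variable [Group G] [Fintype G] (ρ : Representation k G V) [IsIrreducible ρ]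

theorem finrank_smul_sum_conj (A : Module.End k V) :
    (finrank k V : k) • ∑ γ, ρ γ * A * ρ γ⁻¹ = (Fintype.card G * trace k V A) • 1 := by
  have hcomm : ∀ g, ρ g * ∑ γ, ρ γ * A * ρ γ⁻¹ = (∑ γ, ρ γ * A * ρ γ⁻¹) * ρ g := by
    intro g
    rw [Finset.mul_sum, Finset.sum_mul]
    refine Fintype.sum_equiv (Equiv.mulLeft g) _ _ fun γ => ?_
    simp only [Equiv.coe_mulLeft, mul_inv_rev, map_mul, mul_assoc, ← map_mul ρ g⁻¹ g,
      inv_mul_cancel, map_one, mul_one]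
  obtain ⟨c, hc⟩ := exists_eq_smul_one_of_commute ρ _ hcomm
  have htrace_conj : ∀ γ, trace k V (ρ γ * A * ρ γ⁻¹) = trace k V A := fun γ => by
    rw [trace_mul_comm, ← mul_assoc, ← map_mul, inv_mul_cancel, map_one, one_mul]
  have htrace := congrArg (trace k V) hc
  simp only [map_sum, htrace_conj, Finset.sum_const, Finset.card_univ, nsmul_eq_mul, map_smul,
    trace_one, smul_eq_mul] at htrace
  rw [hc, smul_smul, mul_comm, ← htrace]

theorem finrank_smul_sum_smul_eq_smulRight (f : Module.Dual k V) (x : V) :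
    (finrank k V : k) • ∑ γ, f (ρ γ⁻¹ x) • ρ γ = (Fintype.card G : k) • f.smulRight x := by
  ext v
  have := congrArg (fun A : Module.End k V => A x) (finrank_smul_sum_conj ρ (f.smulRight v))
  simpa [mul_smul] using this

theorem eq_zero_of_forall_trace_mul_eq_zero [CharZero k] (T : Module.End k V)
    (hT : ∀ γ, trace k V (ρ γ * T) = 0) : T = 0 := by
  ext x
  rw [LinearMap.zero_apply, ← Module.forall_dual_apply_eq_zero_iff k]
  intro f
  have hcard : (Fintype.card G : k) * f (T x) = 0 := calc
    (Fintype.card G : k) * f (T x) = trace k V (((Fintype.card G : k) • f.smulRight x) * T) := by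
      have hrank_one : T * f.smulRight x = f.smulRight (T x) := by ext; simp
      rw [smul_mul_assoc, map_smul, trace_mul_comm, hrank_one, trace_smulRight, smul_eq_mul]
    _ = (finrank k V : k) * ∑ γ, f (ρ γ⁻¹ x) * trace k V (ρ γ * T) := by
      rw [← finrank_smul_sum_smul_eq_smulRight ρ]
      simp [Finset.sum_mul, map_sum]
    _ = 0 := by simp [hT]
  exact (mul_eq_zero.1 hcard).resolve_left (Nat.cast_ne_zero.2 Fintype.card_ne_zero)

end Representation

/-- Corollary 2.11 III): let `G` be a finite simple nonabelian group and `ρ` a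
nontrivial irreducible representation of `G` on a finite-dimensional complex vector
space `W`, with character `χ g = tr (ρ g)`.  If `χ (γ h) = λ · χ (γ k)` for every
`γ ∈ G`, then `h = k`. -/
theorem simple_group_character_projectively_separates
    {G : Type*} [Group G] [Fintype G] [IsSimpleGroup G]
    (hnab : ∃ a b : G, a * b ≠ b * a)
    {W : Type*} [AddCommGroup W] [Module ℂ W] [FiniteDimensional ℂ W] [Nontrivial W]
    (ρ : Representation ℂ G W)
    (hirr : ∀ p : Submodule ℂ W, (∀ g : G, ∀ x ∈ p, ρ g x ∈ p) → p = ⊥ ∨ p = ⊤)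
    (hnt : ∃ g : G, ρ g ≠ 1) :
    ∀ h k : G, ∀ l : ℂ,
      (∀ γ : G, LinearMap.trace ℂ W (ρ (γ * h)) = l * LinearMap.trace ℂ W (ρ (γ * k)))
        → h = k := by
  intro h k l hl
  have := ρ.isIrreducible_of_forall_submodule hirr
  have hρ : ρ h = l • ρ k := sub_eq_zero.1 <| ρ.eq_zero_of_forall_trace_mul_eq_zero _ fun γ => by
    rw [mul_sub, mul_smul_comm, map_sub, map_smul, ← map_mul, ← map_mul, hl, smul_eq_mul, sub_self]
  have hscalar : ρ (h * k⁻¹) = l • 1 := by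
    rw [map_mul, hρ, smul_mul_assoc, ← map_mul, mul_inv_cancel, map_one]
  have hinj : Function.Injective ρ := IsSimpleGroup.injective_of_ne_one ρ fun h1 => by
    obtain ⟨g, hg⟩ := hnt
    exact hg (DFunLike.congr_fun h1 g)
  have hcentral : h * k⁻¹ ∈ Subgroup.center G := Subgroup.mem_center_iff.2 fun g => hinj <| by
    rw [map_mul ρ g, map_mul ρ _ g, hscalar, mul_smul_comm, smul_mul_assoc, mul_one, one_mul]
  rwa [IsSimpleGroup.center_eq_bot hnab, Subgroup.mem_bot, mul_inv_eq_one] at hcentral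
end

section
/- Let V = (ℤ/2)³ regarded as a vector space over the field with two elements, r a natural number, and v : {1, …, r} → V a tuple such that the image {v(1), …, v(r)} spans V, has exactly 3 distinct elements, and Σ_{i=1}^r v(i) = 0. Then the three distinct values of v form a basis of V, each of the three values occurs an even number of times among v(1), …, v(r), and consequently r is even and r ≥ 6. -/
/-! Three vectors spanning the 3-dimensional space `(ℤ/2)³` form a basis. Grouping the terms of
`∑ i, v i = 0` by value gives `∑ w, n_w • w = 0`, where `n_w` is the multiplicity of `w`; by
linear independence every `n_w` vanishes mod 2, and being positive it is at least 2. Since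
`r = ∑ w, n_w`, `r` is even and `r ≥ 2 · 3`. -/

open Finset

theorem Module.Basis.exists_fin_range_eq_of_linearIndepOn {R M : Type*} [Ring R] [AddCommGroup M]
    [Module R M] {S : Finset M} {n : ℕ} (hli : LinearIndepOn R id (S : Set M))
    (hspan : Submodule.span R (S : Set M) = ⊤) (hcard : #S = n) :
    ∃ b : Module.Basis (Fin n) R M, Set.range b = S := by
  let b := Module.Basis.mk hli (by simpa using hspan.ge)
  refine ⟨b.reindex (Fintype.equivFinOfCardEq (by simpa using hcard)), ?_⟩
  simp [b, Module.Basis.coe_mk]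

theorem dvd_card_fiber_of_linearIndepOn_of_sum_eq_zero {R M ι : Type*} [Ring R]
    [AddCommGroup M] [Module R M] (p : ℕ) [CharP R p] [Fintype ι] [DecidableEq M]
    {v : ι → M} (hli : LinearIndepOn R id (Set.range v)) (hsum : ∑ i, v i = 0) (w : M) :
    p ∣ #{i | v i = w} := by
  have hgrouped : ∑ u ∈ univ.image v, (#{i | v i = u} : R) • u = 0 := by
    simpa [sum_comp (fun u => u) v, Nat.cast_smul_eq_nsmul] using hsum
  by_cases hw : w ∈ univ.image v
  · rw [← CharP.cast_eq_zero_iff R p]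
    exact linearIndepOn_iff'.mp hli _ (fun u => (#{i | v i = u} : R)) (by simp) hgrouped w hw
  · rw [filter_false_of_mem (by simpa using hw), card_empty]
    exact dvd_zero p

section Fibers

variable {ι β : Type*} [Fintype ι] [DecidableEq β] {v : ι → β} {m : ℕ}

theorem dvd_card_of_forall_dvd_card_fiber (h : ∀ w, m ∣ #{i | v i = w}) :
    m ∣ Fintype.card ι := by
  rw [← card_univ, card_eq_sum_card_image v]
  exact dvd_sum fun w _ => h w

theorem mul_card_image_le_card_of_forall_dvd_card_fiber (h : ∀ w, m ∣ #{i | v i = w}) :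
    m * #(univ.image v) ≤ Fintype.card ι := by
  rw [← card_univ, card_eq_sum_card_image v, mul_comm, ← smul_eq_mul]
  refine card_nsmul_le_sum _ _ _ fun w hw => Nat.le_of_dvd ?_ (h w)
  obtain ⟨i, -, rfl⟩ := mem_image.mp hw
  exact card_pos.mpr ⟨i, by simp⟩

end Fibers

/-- Second part of Remark 4.1: if `v : {1,…,r} → (ℤ/2)³` is a tuple whose image spans
`(ℤ/2)³`, has exactly `3` distinct elements, and whose sum is `0`, then the three
distinct values form a basis, each value occurs an even number of times, and hence
`r` is even and `r ≥ 6`. -/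
theorem spherical_system_three_values
    (r : ℕ) (v : Fin r → (Fin 3 → ZMod 2))
    (hspan : Submodule.span (ZMod 2) (Set.range v) = ⊤)
    (hcard : (Finset.image v Finset.univ).card = 3)
    (hsum : ∑ i : Fin r, v i = 0) :
    (∃ b : Module.Basis (Fin 3) (ZMod 2) (Fin 3 → ZMod 2), Set.range b = Set.range v) ∧
      (∀ w ∈ Finset.image v Finset.univ,
        Even (Finset.univ.filter (fun i : Fin r => v i = w)).card) ∧
      Even r ∧ 6 ≤ r := by
  set S : Finset (Fin 3 → ZMod 2) := univ.image v with hSdef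
  have hS : (S : Set (Fin 3 → ZMod 2)) = Set.range v := by simp [hSdef]
  have hspanS : Submodule.span (ZMod 2) (S : Set (Fin 3 → ZMod 2)) = ⊤ := hS ▸ hspan
  have hli : LinearIndepOn (ZMod 2) id (S : Set (Fin 3 → ZMod 2)) :=
    linearIndependent_of_top_le_span_of_card_eq_finrank
      (by simpa only [id, Subtype.range_coe_subtype, Set.ofPred_mem_eq] using hspanS.ge)
      (by simp only [coe_sort_coe, Fintype.card_coe, hcard, Module.finrank_fin_fun])
  have hfiber := dvd_card_fiber_of_linearIndepOn_of_sum_eq_zero 2 (hS ▸ hli) hsum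
  refine ⟨hS ▸ Module.Basis.exists_fin_range_eq_of_linearIndepOn hli hspanS hcard,
    fun w _ => even_iff_two_dvd.mpr (hfiber w), ?_, ?_⟩
  · simpa [even_iff_two_dvd] using dvd_card_of_forall_dvd_card_fiber hfiber
  · simpa [← hSdef, hcard] using mul_card_image_le_card_of_forall_dvd_card_fiber hfiber
end
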